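/- Let A, B, r, θ ∈ ℝ with r ≠ 0, u(x,y) = cos θ·x + sin θ·y, λ(x,y) = −r·u(x,y), and f(x,y) = A·exp(2r·u(x,y) + B). Then D₁(λ,f) and D₂(λ,f) vanish identically on ℝ², where D₁(λ,f) = (λ_x+f_x)(2λ_x f_x + f_{xx}) + (λ_y+f_y)(2λ_y f_x + f_{xy}) − (6λ_x² f_x + 2λ_{xx} f_x + 5λ_x f_{xx} + f_{xxx}) − (6λ_y² f_x + 2λ_{yy} f_x + 5λ_y f_{xy} + f_{xyy}), and D₂ is the analogue with x-derivatives of f replaced by y-derivatives in the outer index. Moreover, if A ≠ 0 then (f_x,f_y) is nowhere zero. -/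
import Mathlib

noncomputable def dx (f : ℝ → ℝ → ℝ) : ℝ → ℝ → ℝ := fun x y => deriv (fun t => f t y) x
noncomputable def dy (f : ℝ → ℝ → ℝ) : ℝ → ℝ → ℝ := fun x y => deriv (fun t => f x t) y

lemma dx_lin (a b : ℝ) : dx (fun x y => a * x + b * y) = fun _ _ => a := by
  funext x y
  have h : HasDerivAt (fun t : ℝ => a * t + b * y) a x := by
    simpa using ((hasDerivAt_id x).const_mul a).add_const (b * y)
  simp [dx, h.deriv]

lemma dy_lin (a b : ℝ) : dy (fun x y => a * x + b * y) = fun _ _ => b := by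
  funext x y
  have h : HasDerivAt (fun t : ℝ => a * x + b * t) b y := by
    simpa using (((hasDerivAt_id y).const_mul b).const_add (a * x))
  simp [dy, h.deriv]

lemma dx_const (c : ℝ) : dx (fun _ _ => c) = fun _ _ => 0 := by
  funext x y; simp [dx]

lemma dy_const (c : ℝ) : dy (fun _ _ => c) = fun _ _ => 0 := by
  funext x y; simp [dy]

lemma dx_exp (C p q : ℝ) :
    dx (fun x y => C * Real.exp (p * x + q * y))
      = fun x y => (C * p) * Real.exp (p * x + q * y) := by
  funext x y
  have h1 : HasDerivAt (fun t : ℝ => p * t + q * y) p x := by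
    simpa using ((hasDerivAt_id x).const_mul p).add_const (q * y)
  have h : HasDerivAt (fun t : ℝ => C * Real.exp (p * t + q * y))
      (C * (Real.exp (p * x + q * y) * p)) x := (h1.exp).const_mul C
  simp only [dx, h.deriv]; ring

lemma dy_exp (C p q : ℝ) :
    dy (fun x y => C * Real.exp (p * x + q * y))
      = fun x y => (C * q) * Real.exp (p * x + q * y) := by
  funext x y
  have h1 : HasDerivAt (fun t : ℝ => p * x + q * t) q y := by
    simpa using (((hasDerivAt_id y).const_mul q).const_add (p * x))
  have h : HasDerivAt (fun t : ℝ => C * Real.exp (p * x + q * t))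
      (C * (Real.exp (p * x + q * y) * q)) y := (h1.exp).const_mul C
  simp only [dy, h.deriv]; ring

/-- The operator `D₁` from the paper. -/
noncomputable def D1 (l f : ℝ → ℝ → ℝ) : ℝ → ℝ → ℝ := fun x y =>
  (dx l x y + dx f x y) * (2 * dx l x y * dx f x y + dx (dx f) x y)
  + (dy l x y + dy f x y) * (2 * dy l x y * dx f x y + dy (dx f) x y)
  - (6 * (dx l x y)^2 * dx f x y + 2 * dx (dx l) x y * dx f x y
      + 5 * dx l x y * dx (dx f) x y + dx (dx (dx f)) x y)
  - (6 * (dy l x y)^2 * dx f x y + 2 * dy (dy l) x y * dx f x y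
      + 5 * dy l x y * dy (dx f) x y + dy (dy (dx f)) x y)

/-- The operator `D₂` from the paper. -/
noncomputable def D2 (l f : ℝ → ℝ → ℝ) : ℝ → ℝ → ℝ := fun x y =>
  (dx l x y + dx f x y) * (2 * dx l x y * dy f x y + dx (dy f) x y)
  + (dy l x y + dy f x y) * (2 * dy l x y * dy f x y + dy (dy f) x y)
  - (6 * (dx l x y)^2 * dy f x y + 2 * dx (dx l) x y * dy f x y
      + 5 * dx l x y * dx (dy f) x y + dx (dx (dy f)) x y)
  - (6 * (dy l x y)^2 * dy f x y + 2 * dy (dy l) x y * dy f x y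
      + 5 * dy l x y * dy (dy f) x y + dy (dy (dy f)) x y)

theorem stmt17 (A B r θ : ℝ) (hr : r ≠ 0) :
    (∀ x y : ℝ,
      D1 (fun x y => -r * (Real.cos θ * x + Real.sin θ * y))
         (fun x y => A * Real.exp (2 * r * (Real.cos θ * x + Real.sin θ * y) + B)) x y = 0 ∧
      D2 (fun x y => -r * (Real.cos θ * x + Real.sin θ * y))
         (fun x y => A * Real.exp (2 * r * (Real.cos θ * x + Real.sin θ * y) + B)) x y = 0) ∧
    (A ≠ 0 → ∀ x y : ℝ,
      ¬ (dx (fun x y => A * Real.exp (2 * r * (Real.cos θ * x + Real.sin θ * y) + B)) x y = 0 ∧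
          dy (fun x y => A * Real.exp (2 * r * (Real.cos θ * x + Real.sin θ * y) + B)) x y = 0)) := by
  set c := Real.cos θ with hc
  set s := Real.sin θ with hs
  have hF : (fun x y : ℝ => A * Real.exp (2 * r * (c * x + s * y) + B))
      = fun x y : ℝ => (A * Real.exp B) * Real.exp ((2 * r * c) * x + (2 * r * s) * y) := by
    funext x y
    rw [show 2 * r * (c * x + s * y) + B = ((2 * r * c) * x + (2 * r * s) * y) + B by ring,
      Real.exp_add]
    ring
  have hL : (fun x y : ℝ => -r * (c * x + s * y))
      = fun x y : ℝ => (-(r * c)) * x + (-(r * s)) * y := by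
    funext x y; ring
  rw [hF, hL]
  constructor
  · intro x y
    constructor <;>
    · simp only [D1, D2, dx_exp, dy_exp, dx_lin, dy_lin, dx_const, dy_const]
      ring
  · intro hA x y
    rintro ⟨h1, h2⟩
    simp only [dx_exp] at h1
    simp only [dy_exp] at h2
    have he : Real.exp ((2 * r * c) * x + (2 * r * s) * y) ≠ 0 := Real.exp_ne_zero _
    have hC : A * Real.exp B ≠ 0 := mul_ne_zero hA (Real.exp_ne_zero _)
    have hcc : c = 0 := by
      have := mul_eq_zero.mp h1
      rcases this with h | h
      · rcases mul_eq_zero.mp h with h' | h'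
        · exact absurd h' hC
        · rcases mul_eq_zero.mp h' with h'' | h''
          · exact absurd (by linarith : r = 0) hr
          · exact h''
      · exact absurd h he
    have hss : s = 0 := by
      rcases mul_eq_zero.mp h2 with h | h
      · rcases mul_eq_zero.mp h with h' | h'
        · exact absurd h' hC
        · rcases mul_eq_zero.mp h' with h'' | h''
          · exact absurd (by linarith : r = 0) hr
          · exact h''
      · exact absurd h he
    have := Real.sin_sq_add_cos_sq θ
    rw [← hs, ← hc, hcc, hss] at this
    norm_num at this
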